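/- Let Γ : T → Set R be a non-redundant property and S : R → (V → ℝ) an affine score for reports. Then S elicits Γ if and only if there exist a convex function G : convexHull(T) → ℝ, a set D of linear maps V → ℝ each of which is a subgradient of G at some point of T, a bijection φ : R → D such that Γ(t) = {r ∈ R : φ(r) is a subgradient of G at t} for every t ∈ T, and points {t_r}_{r∈R} ⊆ T with r ∈ Γ(t_r) for each r ∈ R, such that S(r)(t) = G(t_r) + φ(r)(t − t_r) for all r ∈ R and t ∈ T. -/

import Mathlib

/-- `d` is a subgradient of `G` at `t` relative to `convexHull T`. -/
def IsSubgradientAt {V : Type*} [AddCommGroup V] [Module ℝ V]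
    (T : Set V) (G : V → ℝ) (d : V →ₗ[ℝ] ℝ) (t : V) : Prop :=
  ∀ x ∈ convexHull ℝ T, G t + d (x - t) ≤ G x

/-- Each payoff function of `S` is affine. -/
def IsAffineScore {V : Type*} [AddCommGroup V] [Module ℝ V] {R : Type*}
    (S : R → V → ℝ) : Prop :=
  ∀ r : R, ∃ (ℓ : V →ₗ[ℝ] ℝ) (c : ℝ), ∀ x, S r x = ℓ x + c

/-- `S` elicits the property `Γ` on `T`: for each type the supremum of scores is
attained (hence finite), and `Γ t` is exactly the set of optimal reports. -/
def Elicits {V : Type*} [AddCommGroup V] [Module ℝ V] {R : Type*}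
    (T : Set V) (S : R → V → ℝ) (Γ : V → Set R) : Prop :=
  ∀ t ∈ T, (∃ r : R, ∀ r' : R, S r' t ≤ S r t) ∧ Γ t = {r : R | ∀ r' : R, S r' t ≤ S r t}

/-- `Γ` is non-redundant: no level set is contained in the level set of another report. -/
def NonRedundant {V : Type*} [AddCommGroup V] [Module ℝ V] {R : Type*}
    (T : Set V) (Γ : V → Set R) : Prop :=
  ∀ r r' : R, r ≠ r' → ¬ ({t ∈ T | r' ∈ Γ t} ⊆ {t ∈ T | r ∈ Γ t})

/-!
The function `G x = ⨆ r, S r x` is a supremum of affine functions that is finite on `T`, hence on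
its convex hull, where it is convex. By non-redundancy every report `r` is optimal at some type
`tr r`, so its affine score is a supporting hyperplane of `G` at `tr r` and its slope is a
subgradient there; `r` is optimal at `t` exactly when this hyperplane still touches `G` at `t`,
i.e. when the slope is a subgradient at `t`. Non-redundancy also makes `r ↦ slope` injective.
Conversely, scores given by supporting hyperplanes of `G` are bounded by `G` and reach it exactly
where their slope is a subgradient.
-/

section BestScore

variable {X R : Type*}

/-- The function `G` of the characterization. Where the scores are unbounded above, `⨆` returns
the junk value `0`. -/
noncomputable def bestScore (S : R → X → ℝ) (x : X) : ℝ := ⨆ r, S r x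

theorem le_bestScore {S : R → X → ℝ} {x : X} (hx : BddAbove (Set.range fun r => S r x)) (r : R) :
    S r x ≤ bestScore S x :=
  le_ciSup hx r

theorem bestScore_le [Nonempty R] {S : R → X → ℝ} {x : X} {M : ℝ} (h : ∀ r, S r x ≤ M) :
    bestScore S x ≤ M :=
  ciSup_le h

end BestScore

section Elicitation

variable {V : Type*} [AddCommGroup V] [Module ℝ V] {R : Type*}

theorem IsAffineScore.combo_apply {S : R → V → ℝ} (hS : IsAffineScore S) (r : R) {a b : ℝ}
    (hab : a + b = 1) (x y : V) : S r (a • x + b • y) = a * S r x + b * S r y := by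
  obtain ⟨ℓ, c, hℓ⟩ := hS r
  simp only [hℓ, map_add, map_smul, smul_eq_mul]
  linear_combination (-c) * hab

theorem IsAffineScore.exists_linearMap_eq_add {S : R → V → ℝ} (hS : IsAffineScore S) (r : R) :
    ∃ ℓ : V →ₗ[ℝ] ℝ, ∀ x y, S r y = S r x + ℓ (y - x) := by
  obtain ⟨ℓ, c, hℓ⟩ := hS r
  exact ⟨ℓ, fun x y => by simp only [hℓ, map_sub]; ring⟩

theorem IsAffineScore.bddAbove_of_mem_convexHull {S : R → V → ℝ} (hS : IsAffineScore S)
    {T : Set V} (hT : ∀ t ∈ T, BddAbove (Set.range fun r => S r t)) {x : V}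
    (hx : x ∈ convexHull ℝ T) : BddAbove (Set.range fun r => S r x) := by
  refine convexHull_min hT (fun y ⟨My, hMy⟩ z ⟨Mz, hMz⟩ a b ha hb hab => ?_) hx
  refine ⟨a * My + b * Mz, ?_⟩
  rintro _ ⟨r, rfl⟩
  show S r (a • y + b • z) ≤ _
  have hy : S r y ≤ My := hMy ⟨r, rfl⟩
  have hz : S r z ≤ Mz := hMz ⟨r, rfl⟩
  rw [hS.combo_apply r hab]
  gcongr

theorem IsAffineScore.convexOn_bestScore [Nonempty R] {S : R → V → ℝ} (hS : IsAffineScore S)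
    {s : Set V} (hs : Convex ℝ s) (hbdd : ∀ x ∈ s, BddAbove (Set.range fun r => S r x)) :
    ConvexOn ℝ s (bestScore S) := by
  refine ⟨hs, fun x hx y hy a b ha hb hab => bestScore_le fun r => ?_⟩
  have hxr := le_bestScore (hbdd x hx) r
  have hyr := le_bestScore (hbdd y hy) r
  rw [hS.combo_apply r hab, smul_eq_mul, smul_eq_mul]
  gcongr

theorem Elicits.bddAbove {T : Set V} {S : R → V → ℝ} {Γ : V → Set R} (hE : Elicits T S Γ)
    {t : V} (ht : t ∈ T) : BddAbove (Set.range fun r => S r t) := by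
  obtain ⟨r, hr⟩ := (hE t ht).1
  exact ⟨S r t, by rintro _ ⟨r', rfl⟩; exact hr r'⟩

theorem Elicits.eq_setOf_eq_bestScore {T : Set V} {S : R → V → ℝ} {Γ : V → Set R}
    (hE : Elicits T S Γ) {t : V} (ht : t ∈ T) : Γ t = {r | S r t = bestScore S t} := by
  obtain ⟨⟨rmax, hrmax⟩, hΓt⟩ := hE t ht
  have : Nonempty R := ⟨rmax⟩
  have hle := le_bestScore (hE.bddAbove ht)
  rw [hΓt]
  ext r
  exact ⟨fun hr => (hle r).antisymm (bestScore_le hr),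
    fun hr r' => hr ▸ hle r'⟩

theorem elicits_of_le {T : Set V} {S : R → V → ℝ} {Γ : V → Set R} {G : V → ℝ}
    (hle : ∀ t ∈ T, ∀ r, S r t ≤ G t) (hne : ∀ t ∈ T, (Γ t).Nonempty)
    (hΓ : ∀ t ∈ T, Γ t = {r | S r t = G t}) : Elicits T S Γ := by
  intro t ht
  obtain ⟨r₀, hr₀⟩ := hne t ht
  rw [hΓ t ht] at hr₀ ⊢
  have hmax : ∀ r', S r' t ≤ S r₀ t := fun r' => hr₀ ▸ hle t ht r'
  refine ⟨⟨r₀, hmax⟩, Set.ext fun r => ⟨fun hr r' => hr ▸ hle t ht r', fun hr => ?_⟩⟩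
  exact (hle t ht r).antisymm (hr₀ ▸ hr r₀)

theorem Elicits.apply_eq_bestScore_add {T : Set V} {S : R → V → ℝ} {Γ : V → Set R}
    (hE : Elicits T S Γ) {r : R} {ℓ : V →ₗ[ℝ] ℝ} (hℓ : ∀ x y, S r y = S r x + ℓ (y - x)) {s : V}
    (hs : s ∈ T) (hr : r ∈ Γ s) (x : V) : S r x = bestScore S s + ℓ (x - s) := by
  rw [hE.eq_setOf_eq_bestScore hs] at hr
  rw [hℓ s x, ← hr]

theorem NonRedundant.exists_mem {T : Set V} {Γ : V → Set R} (hΓ : NonRedundant T Γ)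
    (hT : T.Nonempty) (hne : ∀ t ∈ T, (Γ t).Nonempty) (r : R) : ∃ t ∈ T, r ∈ Γ t := by
  obtain ⟨t₀, ht₀⟩ := hT
  obtain ⟨r₀, hr₀⟩ := hne t₀ ht₀
  by_contra! h
  rcases eq_or_ne r₀ r with rfl | hne
  · exact h t₀ ht₀ hr₀
  · exact hΓ r₀ r hne fun t ht => absurd ht.2 (h t ht.1)

theorem NonRedundant.injective {T : Set V} {Γ : V → Set R} (hΓ : NonRedundant T Γ)
    {ι : Type*} {f : R → ι} {p : ι → V → Prop} (hf : ∀ t ∈ T, Γ t = {r | p (f r) t}) :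
    Function.Injective f := by
  intro r r' hrr'
  by_contra hne
  refine hΓ r r' hne fun t ⟨ht, hr't⟩ => ⟨ht, ?_⟩
  rw [hf t ht] at hr't ⊢
  show p (f r) t
  rw [hrr']
  exact hr't

theorem IsSubgradientAt.isSubgradientAt_iff {T : Set V} {G : V → ℝ} {d : V →ₗ[ℝ] ℝ} {s t : V}
    (hs : IsSubgradientAt T G d s) (hsT : s ∈ convexHull ℝ T) (htT : t ∈ convexHull ℝ T) :
    IsSubgradientAt T G d t ↔ G t = G s + d (t - s) := by
  refine ⟨fun ht => ?_, fun h x hx => ?_⟩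
  · have h₁ := hs t htT
    have h₂ := ht s hsT
    rw [← neg_sub, map_neg] at h₂
    linarith
  · have : t - s + (x - t) = x - s := by abel
    calc G t + d (x - t) = G s + d (x - s) := by rw [h, add_assoc, ← map_add, this]
      _ ≤ G x := hs x hx

theorem setOf_isSubgradientAt_eq {T : Set V} {G : V → ℝ} {S : R → V → ℝ}
    {φ : R → V →ₗ[ℝ] ℝ} {tr : R → V} (hsub : ∀ r, IsSubgradientAt T G (φ r) (tr r))
    (htr : ∀ r, tr r ∈ T) (hS : ∀ r, ∀ t ∈ T, S r t = G (tr r) + φ r (t - tr r))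
    {t : V} (ht : t ∈ T) :
    {r | IsSubgradientAt T G (φ r) t} = {r | S r t = G t} := by
  ext r
  change IsSubgradientAt T G (φ r) t ↔ S r t = G t
  rw [hS r t ht, eq_comm,
    (hsub r).isSubgradientAt_iff (subset_convexHull ℝ T (htr r)) (subset_convexHull ℝ T ht)]

end Elicitation

/-- Characterization of affine scores eliciting a non-redundant property. -/
theorem property_elicitation_characterization {V : Type*} [AddCommGroup V] [Module ℝ V]
    {R : Type*} (T : Set V) (hT : T.Nonempty) (Γ : V → Set R)
    (hΓne : ∀ t ∈ T, (Γ t).Nonempty) (hΓ : NonRedundant T Γ)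
    (S : R → V → ℝ) (hS : IsAffineScore S) :
    Elicits T S Γ ↔
    ∃ (G : V → ℝ) (D : Set (V →ₗ[ℝ] ℝ)) (φ : R → (V →ₗ[ℝ] ℝ)) (tr : R → V),
      ConvexOn ℝ (convexHull ℝ T) G ∧
      (∀ d ∈ D, ∃ t ∈ T, IsSubgradientAt T G d t) ∧
      Function.Injective φ ∧ Set.range φ = D ∧
      (∀ t ∈ T, Γ t = {r : R | IsSubgradientAt T G (φ r) t}) ∧
      (∀ r : R, tr r ∈ T ∧ r ∈ Γ (tr r)) ∧
      (∀ r : R, ∀ t ∈ T, S r t = G (tr r) + φ r (t - tr r)) := by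
  constructor
  · intro hE
    have : Nonempty R := hT.elim fun t ht => (hΓne t ht).to_subtype.map Subtype.val
    have hbdd : ∀ x ∈ convexHull ℝ T, BddAbove (Set.range fun r => S r x) := fun _ =>
      hS.bddAbove_of_mem_convexHull fun _ => hE.bddAbove
    choose tr htrT htrΓ using hΓ.exists_mem hT hΓne
    choose φ hφ using hS.exists_linearMap_eq_add
    have hrep : ∀ r x, S r x = bestScore S (tr r) + φ r (x - tr r) := fun r =>
      hE.apply_eq_bestScore_add (hφ r) (htrT r) (htrΓ r)
    have hsub : ∀ r, IsSubgradientAt T (bestScore S) (φ r) (tr r) := fun r x hx =>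
      hrep r x ▸ le_bestScore (hbdd x hx) r
    have hΓsub : ∀ t ∈ T, Γ t = {r | IsSubgradientAt T (bestScore S) (φ r) t} := fun t ht => by
      rw [hE.eq_setOf_eq_bestScore ht,
        setOf_isSubgradientAt_eq hsub htrT (fun r t _ => hrep r t) ht]
    refine ⟨bestScore S, Set.range φ, φ, tr, hS.convexOn_bestScore (convex_convexHull ℝ T) hbdd,
      ?_, hΓ.injective hΓsub, rfl, hΓsub, fun r => ⟨htrT r, htrΓ r⟩, fun r t _ => hrep r t⟩
    rintro _ ⟨r, rfl⟩
    exact ⟨tr r, htrT r, hsub r⟩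
  · rintro ⟨G, D, φ, tr, -, -, -, -, hΓsub, htr, hrep⟩
    have hsub : ∀ r, IsSubgradientAt T G (φ r) (tr r) := fun r => by
      simpa [hΓsub _ (htr r).1] using (htr r).2
    refine elicits_of_le (G := G) (fun t ht r => ?_) hΓne fun t ht => ?_
    · rw [hrep r t ht]
      exact hsub r t (subset_convexHull ℝ T ht)
    · rw [hΓsub t ht, setOf_isSubgradientAt_eq hsub (fun r => (htr r).1) hrep ht]
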